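/- arXiv:1508.01818 — 11 statements merged into one kernel-verified Lean document; each statement's English description precedes it below -/
import Mathlib

section
/- If f : [0,1] → ℝ is bounded and concave, then B f is concave on [0,1]. -/
/-- Two-state consumer model: transition probabilities `lNA ≤ lAA`, costs
`CHN ≤ CL ≤ CHA`, discount factor `β ∈ (0,1)`. -/
structure CouponModel where
  lNA : ℝ
  lAA : ℝ
  CHN : ℝ
  CL : ℝ
  CHA : ℝ
  β : ℝ
  lNA_nonneg : 0 ≤ lNA
  lNA_le_lAA : lNA ≤ lAA
  lAA_le_one : lAA ≤ 1
  CHN_le_CL : CHN ≤ CL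
  CL_le_CHA : CL ≤ CHA
  β_pos : 0 < β
  β_lt_one : β < 1

namespace CouponModel

/-- Belief-update map `T(p) = (1-p)·λNA + p·λAA`. -/
noncomputable def T (M : CouponModel) (p : ℝ) : ℝ := (1 - p) * M.lNA + p * M.lAA

/-- Bellman operator. -/
noncomputable def B (M : CouponModel) (f : ℝ → ℝ) (p : ℝ) : ℝ :=
  min (M.CL + M.β * f (M.T p))
    ((1 - p) * M.CHN + p * M.CHA + M.β * ((1 - p) * f M.lNA + p * f M.lAA))

/-- A function `f : ℝ → ℝ` is bounded on the belief space `[0,1]`. -/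
def IsBdd (f : ℝ → ℝ) : Prop := ∃ C : ℝ, ∀ p ∈ Set.Icc (0:ℝ) 1, |f p| ≤ C

/-- `V` is a bounded fixed point of the Bellman operator on `[0,1]`. -/
def IsValue (M : CouponModel) (V : ℝ → ℝ) : Prop :=
  IsBdd V ∧ ∀ p ∈ Set.Icc (0:ℝ) 1, V p = M.B V p

/-- Value of offering the low-privacy coupon at belief `p`. -/
noncomputable def LPval (M : CouponModel) (V : ℝ → ℝ) (p : ℝ) : ℝ :=
  M.CL + M.β * V (M.T p)

/-- Value of offering the high-privacy coupon at belief `p`. -/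
noncomputable def HPval (M : CouponModel) (V : ℝ → ℝ) (p : ℝ) : ℝ :=
  (1 - p) * M.CHN + p * M.CHA + M.β * ((1 - p) * V M.lNA + p * V M.lAA)

/-- `τ` is a threshold for `V`: HP is optimal below `τ`, LP is optimal above `τ`. -/
def IsThreshold (M : CouponModel) (V : ℝ → ℝ) (τ : ℝ) : Prop :=
  τ ∈ Set.Icc (0:ℝ) 1 ∧
    (∀ p ∈ Set.Icc (0:ℝ) τ, V p = M.HPval V p) ∧
    (∀ p ∈ Set.Icc τ (1:ℝ), V p = M.LPval V p)

end CouponModel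

/-- If `f` is bounded and concave on `[0,1]`, then `B f` is concave on `[0,1]`. -/
theorem bellman_preserves_concave (M : CouponModel) (f : ℝ → ℝ)
    (hbdd : CouponModel.IsBdd f) (hconc : ConcaveOn ℝ (Set.Icc (0:ℝ) 1) f) :
    ConcaveOn ℝ (Set.Icc (0:ℝ) 1) (M.B f) := by
  have hT : ∀ p ∈ Set.Icc (0:ℝ) 1, M.T p ∈ Set.Icc (0:ℝ) 1 := by
    intro p hp
    obtain ⟨hp0, hp1⟩ := hp
    have h1 := M.lNA_nonneg
    have h2 := M.lNA_le_lAA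
    have h3 := M.lAA_le_one
    constructor
    · unfold CouponModel.T; nlinarith
    · unfold CouponModel.T; nlinarith
  refine ⟨convex_Icc 0 1, ?_⟩
  intro p hp q hq a b ha hb hab
  have hTp := hT p hp
  have hTq := hT q hq
  have hTlin : M.T (a • p + b • q) = a * M.T p + b * M.T q := by
    simp only [smul_eq_mul, CouponModel.T]
    linear_combination (-M.lNA) * hab
  have hf : a • f (M.T p) + b • f (M.T q) ≤ f (a • M.T p + b • M.T q) :=
    hconc.2 hTp hTq ha hb hab
  simp only [smul_eq_mul] at hf ⊢
  have hβ := M.β_pos.le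
  have hLp : M.B f p ≤ M.CL + M.β * f (M.T p) := min_le_left _ _
  have hLq : M.B f q ≤ M.CL + M.β * f (M.T q) := min_le_left _ _
  have hHp : M.B f p ≤ (1 - p) * M.CHN + p * M.CHA +
      M.β * ((1 - p) * f M.lNA + p * f M.lAA) := min_le_right _ _
  have hHq : M.B f q ≤ (1 - q) * M.CHN + q * M.CHA +
      M.β * ((1 - q) * f M.lNA + q * f M.lAA) := min_le_right _ _
  refine le_min ?_ ?_
  · have hthis : f (a * M.T p + b * M.T q) = f (M.T (a * p + b * q)) := by
      rw [show M.T (a * p + b * q) = a * M.T p + b * M.T q from hTlin]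
    have e1 : a * (M.CL + M.β * f (M.T p)) + b * (M.CL + M.β * f (M.T q))
        = M.CL + M.β * (a * f (M.T p) + b * f (M.T q)) := by
      linear_combination M.CL * hab
    have e2 := mul_le_mul_of_nonneg_left hf hβ
    have h1 := mul_le_mul_of_nonneg_left hLp ha
    have h2 := mul_le_mul_of_nonneg_left hLq hb
    show a * M.B f p + b * M.B f q ≤ M.CL + M.β * f (M.T (a * p + b * q))
    rw [← hthis]
    linarith
  · show a * M.B f p + b * M.B f q ≤
      (1 - (a * p + b * q)) * M.CHN + (a * p + b * q) * M.CHA +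
        M.β * ((1 - (a * p + b * q)) * f M.lNA + (a * p + b * q) * f M.lAA)
    have h1 := mul_le_mul_of_nonneg_left hHp ha
    have h2 := mul_le_mul_of_nonneg_left hHq hb
    have e : a * ((1 - p) * M.CHN + p * M.CHA + M.β * ((1 - p) * f M.lNA + p * f M.lAA))
        + b * ((1 - q) * M.CHN + q * M.CHA + M.β * ((1 - q) * f M.lNA + q * f M.lAA))
        = (1 - (a * p + b * q)) * M.CHN + (a * p + b * q) * M.CHA +
          M.β * ((1 - (a * p + b * q)) * f M.lNA + (a * p + b * q) * f M.lAA) := by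
      linear_combination (M.CHN + M.β * f M.lNA) * hab
    linarith
end

section
/- If f : [0,1] → ℝ is bounded and nondecreasing, then B f is nondecreasing on [0,1]. -/
/-- If `f` is bounded and nondecreasing on `[0,1]`, then `B f` is nondecreasing on `[0,1]`. -/
theorem bellman_preserves_monotone (M : CouponModel) (f : ℝ → ℝ)
    (hbdd : CouponModel.IsBdd f) (hmono : MonotoneOn f (Set.Icc (0:ℝ) 1)) :
    MonotoneOn (M.B f) (Set.Icc (0:ℝ) 1) := by
  intro p hp q hq hpq
  have hNA0 : (0:ℝ) ≤ M.lNA := M.lNA_nonneg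
  have hle : M.lNA ≤ M.lAA := M.lNA_le_lAA
  have hAA1 : M.lAA ≤ 1 := M.lAA_le_one
  have hNAmem : M.lNA ∈ Set.Icc (0:ℝ) 1 := ⟨hNA0, hle.trans hAA1⟩
  have hAAmem : M.lAA ∈ Set.Icc (0:ℝ) 1 := ⟨hNA0.trans hle, hAA1⟩
  have hT : ∀ r ∈ Set.Icc (0:ℝ) 1, M.T r ∈ Set.Icc (0:ℝ) 1 := by
    intro r hr
    obtain ⟨hr0, hr1⟩ := hr
    constructor
    · unfold CouponModel.T; nlinarith
    · unfold CouponModel.T; nlinarith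
  have hTmono : M.T p ≤ M.T q := by
    unfold CouponModel.T; nlinarith [hpq, hle]
  have hf : f M.lNA ≤ f M.lAA := hmono hNAmem hAAmem hle
  have hfT : f (M.T p) ≤ f (M.T q) := hmono (hT p hp) (hT q hq) hTmono
  unfold CouponModel.B
  apply min_le_min
  · have := mul_le_mul_of_nonneg_left hfT M.β_pos.le
    linarith
  · nlinarith [mul_nonneg (sub_nonneg.2 hpq) (sub_nonneg.2 (M.CHN_le_CL.trans M.CL_le_CHA)),
      mul_nonneg (mul_nonneg M.β_pos.le (sub_nonneg.2 hpq)) (sub_nonneg.2 hf)]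
end

section
/- The value function V (the unique bounded fixed point of the Bellman operator B) is concave and nondecreasing on [0,1]. -/
namespace CouponModel

variable (M : CouponModel)

lemma lNA_mem : M.lNA ∈ Set.Icc (0:ℝ) 1 :=
  ⟨M.lNA_nonneg, M.lNA_le_lAA.trans M.lAA_le_one⟩

lemma lAA_mem : M.lAA ∈ Set.Icc (0:ℝ) 1 :=
  ⟨M.lNA_nonneg.trans M.lNA_le_lAA, M.lAA_le_one⟩

lemma T_mem {p : ℝ} (hp : p ∈ Set.Icc (0:ℝ) 1) : M.T p ∈ Set.Icc (0:ℝ) 1 := by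
  obtain ⟨h0, h1⟩ := hp
  constructor <;> simp only [T] <;>
    nlinarith [M.lNA_nonneg, M.lNA_le_lAA, M.lAA_le_one]

lemma B_dist (f g : ℝ → ℝ) (C : ℝ) (hC : ∀ q ∈ Set.Icc (0:ℝ) 1, |f q - g q| ≤ C)
    {p : ℝ} (hp : p ∈ Set.Icc (0:ℝ) 1) : |M.B f p - M.B g p| ≤ M.β * C := by
  obtain ⟨hp0, hp1⟩ := hp
  have h1 := abs_le.1 (hC _ (M.T_mem ⟨hp0, hp1⟩))
  have h2 := abs_le.1 (hC _ M.lNA_mem)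
  have h3 := abs_le.1 (hC _ M.lAA_mem)
  have hb := M.β_pos
  have key := abs_min_sub_min_le_max
    (M.CL + M.β * f (M.T p))
    ((1 - p) * M.CHN + p * M.CHA + M.β * ((1 - p) * f M.lNA + p * f M.lAA))
    (M.CL + M.β * g (M.T p))
    ((1 - p) * M.CHN + p * M.CHA + M.β * ((1 - p) * g M.lNA + p * g M.lAA))
  have hA : |(M.CL + M.β * f (M.T p)) - (M.CL + M.β * g (M.T p))| ≤ M.β * C := by
    rw [abs_le]; constructor <;> nlinarith [h1.1, h1.2]
  have hB : |((1 - p) * M.CHN + p * M.CHA + M.β * ((1 - p) * f M.lNA + p * f M.lAA))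
      - ((1 - p) * M.CHN + p * M.CHA + M.β * ((1 - p) * g M.lNA + p * g M.lAA))|
      ≤ M.β * C := by
    have t1 : (0:ℝ) ≤ (1 - p) * (C - (f M.lNA - g M.lNA)) :=
      mul_nonneg (by linarith) (by linarith [h2.2])
    have t2 : (0:ℝ) ≤ p * (C - (f M.lAA - g M.lAA)) :=
      mul_nonneg hp0 (by linarith [h3.2])
    have t3 : (0:ℝ) ≤ (1 - p) * ((f M.lNA - g M.lNA) + C) :=
      mul_nonneg (by linarith) (by linarith [h2.1])
    have t4 : (0:ℝ) ≤ p * ((f M.lAA - g M.lAA) + C) :=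
      mul_nonneg hp0 (by linarith [h3.1])
    have hS1 : (1 - p) * (f M.lNA - g M.lNA) + p * (f M.lAA - g M.lAA) ≤ C := by
      nlinarith [t1, t2]
    have hS2 : -C ≤ (1 - p) * (f M.lNA - g M.lNA) + p * (f M.lAA - g M.lAA) := by
      nlinarith [t3, t4]
    rw [abs_le]
    constructor <;>
      nlinarith [mul_le_mul_of_nonneg_left hS1 hb.le, mul_le_mul_of_nonneg_left hS2 hb.le]
  calc |M.B f p - M.B g p| ≤ _ := key
    _ ≤ M.β * C := max_le hA hB

lemma B_preserves (f : ℝ → ℝ) (hc : ConcaveOn ℝ (Set.Icc (0:ℝ) 1) f)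
    (hm : MonotoneOn f (Set.Icc (0:ℝ) 1)) :
    ConcaveOn ℝ (Set.Icc (0:ℝ) 1) (M.B f) ∧ MonotoneOn (M.B f) (Set.Icc (0:ℝ) 1) := by
  have hb := M.β_pos
  have hLP : ConcaveOn ℝ (Set.Icc (0:ℝ) 1) (fun p => M.CL + M.β * f (M.T p)) := by
    refine ⟨convex_Icc 0 1, ?_⟩
    intro x hx y hy a b ha hb' hab
    obtain rfl : b = 1 - a := by linarith
    have hT : M.T (a * x + (1 - a) * y) = a * M.T x + (1 - a) * M.T y := by
      simp only [T]; ring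
    have hcc := hc.2 (M.T_mem hx) (M.T_mem hy) ha hb' hab
    simp only [smul_eq_mul] at hcc ⊢
    rw [hT]
    nlinarith [mul_le_mul_of_nonneg_left hcc M.β_pos.le]
  have hHP : ConcaveOn ℝ (Set.Icc (0:ℝ) 1)
      (fun p => (1 - p) * M.CHN + p * M.CHA + M.β * ((1 - p) * f M.lNA + p * f M.lAA)) := by
    refine ⟨convex_Icc 0 1, ?_⟩
    intro x hx y hy a b ha hb' hab
    obtain rfl : b = 1 - a := by linarith
    simp only [smul_eq_mul]
    apply le_of_eq
    ring
  constructor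
  · exact hLP.inf hHP
  · intro x hx y hy hxy
    have hTle : M.T x ≤ M.T y := by
      simp only [T]; nlinarith [M.lNA_le_lAA]
    have hLPle : M.CL + M.β * f (M.T x) ≤ M.CL + M.β * f (M.T y) := by
      have := hm (M.T_mem hx) (M.T_mem hy) hTle
      nlinarith
    have hfle : f M.lNA ≤ f M.lAA := hm M.lNA_mem M.lAA_mem M.lNA_le_lAA
    have hHPle : (1 - x) * M.CHN + x * M.CHA + M.β * ((1 - x) * f M.lNA + x * f M.lAA)
        ≤ (1 - y) * M.CHN + y * M.CHA + M.β * ((1 - y) * f M.lNA + y * f M.lAA) := by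
      have h1 : (0:ℝ) ≤ (y - x) * (M.CHA - M.CHN) :=
        mul_nonneg (by linarith) (by linarith [M.CHN_le_CL.trans M.CL_le_CHA])
      have h2 : (0:ℝ) ≤ M.β * ((y - x) * (f M.lAA - f M.lNA)) :=
        mul_nonneg M.β_pos.le (mul_nonneg (by linarith) (by linarith))
      nlinarith [h1, h2]
    exact min_le_min hLPle hHPle

end CouponModel

/-- The value function (the unique bounded fixed point of the Bellman operator)
is concave and nondecreasing on `[0,1]`. -/
theorem value_concave_monotone (M : CouponModel) (V : ℝ → ℝ) (hV : M.IsValue V) :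
    ConcaveOn ℝ (Set.Icc (0:ℝ) 1) V ∧ MonotoneOn V (Set.Icc (0:ℝ) 1) := by
  classical
  obtain ⟨⟨C, hC⟩, hfix⟩ := hV
  have hC0 : (0:ℝ) ≤ C := (abs_nonneg _).trans (hC 0 ⟨le_refl 0, zero_le_one⟩)
  -- iterates of the Bellman operator starting from 0
  set W : ℕ → ℝ → ℝ := fun n => (M.B)^[n] (fun _ => 0) with hW
  have hW0 : W 0 = fun _ => 0 := rfl
  have hWsucc : ∀ n, W (n + 1) = M.B (W n) := by
    intro n
    simp [hW, Function.iterate_succ_apply']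
  -- each iterate is concave and monotone
  have hCM : ∀ n, ConcaveOn ℝ (Set.Icc (0:ℝ) 1) (W n) ∧
      MonotoneOn (W n) (Set.Icc (0:ℝ) 1) := by
    intro n
    induction n with
    | zero => exact ⟨concaveOn_const 0 (convex_Icc 0 1), monotoneOn_const⟩
    | succ n ih =>
      rw [hWsucc]
      exact M.B_preserves (W n) ih.1 ih.2
  -- distance from V
  have hdist : ∀ n, ∀ p ∈ Set.Icc (0:ℝ) 1, |W n p - V p| ≤ M.β ^ n * C := by
    intro n
    induction n with
    | zero =>
      intro p hp
      simpa [hW0, abs_sub_comm] using hC p hp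
    | succ n ih =>
      intro p hp
      rw [hWsucc]
      have := M.B_dist (W n) V (M.β ^ n * C) ih hp
      rw [← hfix p hp] at this
      calc |M.B (W n) p - V p| ≤ M.β * (M.β ^ n * C) := this
        _ = M.β ^ (n + 1) * C := by ring
  -- convergence to V
  have hlim : ∀ p ∈ Set.Icc (0:ℝ) 1,
      Filter.Tendsto (fun n => W n p) Filter.atTop (nhds (V p)) := by
    intro p hp
    have hpow : Filter.Tendsto (fun n : ℕ => M.β ^ n * C) Filter.atTop (nhds 0) := by
      simpa using (tendsto_pow_atTop_nhds_zero_of_lt_one M.β_pos.le M.β_lt_one).mul_const C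
    have hsq : Filter.Tendsto (fun n => |W n p - V p|) Filter.atTop (nhds 0) :=
      squeeze_zero (fun n => abs_nonneg _) (fun n => hdist n p hp) hpow
    rw [tendsto_iff_dist_tendsto_zero]
    simpa [Real.dist_eq] using hsq
  constructor
  · refine ⟨convex_Icc 0 1, ?_⟩
    intro x hx y hy a b ha hb hab
    have hxy : a • x + b • y ∈ Set.Icc (0:ℝ) 1 :=
      (convex_Icc (0:ℝ) 1) hx hy ha hb hab
    refine le_of_tendsto_of_tendsto'
      (((hlim x hx).const_mul a).add ((hlim y hy).const_mul b))
      (hlim _ hxy) (fun n => ?_)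
    have := (hCM n).1.2 hx hy ha hb hab
    simpa [smul_eq_mul] using this
  · intro x hx y hy hxy
    exact le_of_tendsto_of_tendsto' (hlim x hx) (hlim y hy)
      (fun n => (hCM n).2 hx hy hxy)
end

section
/- If τ ∈ [0,1] is a threshold for V and T(τ) ≥ τ, then V(p) = C_L/(1−β) for every p ∈ [τ, 1]. -/
open Set Filter Topology

theorem eqOn_zero_of_abs_le_mul_comp {α : Type*} {S : Set α} {g : α → α} (hg : MapsTo g S S)
    {h : α → ℝ} {r C : ℝ} (hr0 : 0 ≤ r) (hr1 : r < 1) (hC : ∀ x ∈ S, |h x| ≤ C)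
    (hh : ∀ x ∈ S, |h x| ≤ r * |h (g x)|) : ∀ x ∈ S, h x = 0 := by
  have hiter : ∀ n : ℕ, ∀ x ∈ S, |h x| ≤ r ^ n * C := by
    intro n
    induction n with
    | zero => simpa using hC
    | succ n ih =>
      intro x hx
      calc |h x| ≤ r * |h (g x)| := hh x hx
        _ ≤ r * (r ^ n * C) := mul_le_mul_of_nonneg_left (ih _ (hg hx)) hr0
        _ = r ^ (n + 1) * C := by ring
  have hlim : Tendsto (fun n : ℕ => r ^ n * C) atTop (𝓝 0) := by
    simpa using (tendsto_pow_atTop_nhds_zero_of_lt_one hr0 hr1).mul_const C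
  intro x hx
  exact abs_nonpos_iff.mp (ge_of_tendsto' hlim fun n => hiter n x hx)

theorem eq_div_one_sub_of_eq_add_mul_comp {α : Type*} {S : Set α} {g : α → α}
    (hg : MapsTo g S S) {f : α → ℝ} {a β C : ℝ} (hβ : |β| < 1) (hC : ∀ x ∈ S, |f x| ≤ C)
    (hf : ∀ x ∈ S, f x = a + β * f (g x)) : ∀ x ∈ S, f x = a / (1 - β) := by
  set c := a / (1 - β) with hc_def
  have hc : a + β * c = c := by
    have : 1 - β ≠ 0 := by linarith [le_abs_self β]
    rw [hc_def]
    field_simp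
    ring
  have hstep : ∀ x ∈ S, f x - c = β * (f (g x) - c) := fun x hx => by
    rw [hf x hx]
    linarith
  have hzero := eqOn_zero_of_abs_le_mul_comp (h := fun x => f x - c) hg (abs_nonneg β) hβ
    (fun x hx => (abs_sub _ _).trans (add_le_add_left (hC x hx) |c|))
    (fun x hx => by rw [hstep x hx, abs_mul])
  exact fun x hx => sub_eq_zero.mp (hzero x hx)

namespace CouponModel

theorem monotone_T (M : CouponModel) : Monotone M.T := by
  intro p q hpq
  have := M.lNA_le_lAA
  unfold T
  nlinarith

theorem mapsTo_T_Icc (M : CouponModel) {τ : ℝ} (hT : τ ≤ M.T τ) :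
    MapsTo M.T (Icc τ 1) (Icc τ 1) := fun p hp =>
  ⟨hT.trans (M.monotone_T hp.1),
    (M.monotone_T hp.2).trans (by simpa [T] using M.lAA_le_one)⟩

end CouponModel

/-- If `τ` is a threshold for `V` and `T(τ) ≥ τ`, then `V(p) = C_L/(1-β)`
for every `p ∈ [τ,1]`. -/
theorem value_on_lp_region (M : CouponModel) (V : ℝ → ℝ) (hV : M.IsValue V)
    (τ : ℝ) (hτ : M.IsThreshold V τ) (hT : τ ≤ M.T τ) :
    ∀ p ∈ Set.Icc τ (1:ℝ), V p = M.CL / (1 - M.β) := by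
  obtain ⟨⟨C, hC⟩, -⟩ := hV
  obtain ⟨⟨hτ0, -⟩, -, hLP⟩ := hτ
  have hβ : |M.β| < 1 := by rw [abs_of_pos M.β_pos]; exact M.β_lt_one
  exact eq_div_one_sub_of_eq_add_mul_comp (M.mapsTo_T_Icc hT) hβ
    (fun p hp => hC p ⟨hτ0.trans hp.1, hp.2⟩) hLP
end

section
/- Assume C_HN < C_HA and set δ = C_HA − C_HN + β·(V(λAA) − V(λNA)). If τ ∈ [0,1] is a threshold for V and T(τ) ≥ τ, then τ = (C_L/(1−β) − C_HN − β·V(λNA)) / δ. -/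
/-!
Write `c = C_L / (1 - β)` for the cost of offering the low-privacy coupon forever; it is the fixed
point of `x ↦ C_L + β x`. Since `V ≤ LP-value` everywhere, `V - c` is bounded and contracted by `β`
along the orbits of `T`, so `V ≤ c` on `[0,1]`. When `T τ ≥ τ`, monotonicity of `T` makes `[τ,1]`
invariant, and there `V = LP-value`, so `V = c` on `[τ,1]`, in particular at `τ` and at `λAA ≥ T τ`.
Evaluating `V(τ) = HP-value(τ)` then gives a linear equation in `τ` whose coefficient `δ` is positive.
-/

open Set Filter

theorem nonpos_of_le_mul_comp {α : Type*} {s : Set α} {f : α → α} (hf : MapsTo f s s)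
    {g : α → ℝ} {C : ℝ} (hC : ∀ x ∈ s, g x ≤ C) {β : ℝ} (hβ0 : 0 ≤ β) (hβ1 : β < 1)
    (hg : ∀ x ∈ s, g x ≤ β * g (f x)) {x : α} (hx : x ∈ s) : g x ≤ 0 := by
  have hiter : ∀ n : ℕ, ∀ x ∈ s, g x ≤ β ^ n * max C 0 := by
    intro n
    induction n with
    | zero => intro x hx; simpa using (hC x hx).trans (le_max_left C 0)
    | succ n ih =>
      intro x hx
      calc g x ≤ β * g (f x) := hg x hx
        _ ≤ β * (β ^ n * max C 0) := mul_le_mul_of_nonneg_left (ih _ (hf hx)) hβ0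
        _ = β ^ (n + 1) * max C 0 := by ring
  have hlim : Tendsto (fun n : ℕ => β ^ n * max C 0) atTop (nhds 0) := by
    simpa using (tendsto_pow_atTop_nhds_zero_of_lt_one hβ0 hβ1).mul_const (max C 0)
  exact ge_of_tendsto' hlim fun n => hiter n x hx

namespace CouponModel

variable (M : CouponModel)

theorem T_monotone : Monotone M.T := fun _ _ hpq => by
  unfold T; nlinarith [M.lNA_le_lAA]

theorem T_le_lAA {p : ℝ} (hp : p ≤ 1) : M.T p ≤ M.lAA := by
  unfold T; nlinarith [M.lNA_le_lAA]

theorem mapsTo_T_Icc_zero_one : MapsTo M.T (Icc 0 1) (Icc 0 1) := fun p hp =>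
  ⟨M.lNA_nonneg.trans (by simpa [T] using M.T_monotone hp.1),
    (M.T_le_lAA hp.2).trans M.lAA_le_one⟩

theorem mapsTo_T_Icc_of_le_T {τ : ℝ} (hτ : 0 ≤ τ) (hT : τ ≤ M.T τ) :
    MapsTo M.T (Icc τ 1) (Icc τ 1) := fun _ hp =>
  ⟨hT.trans (M.T_monotone hp.1), (M.mapsTo_T_Icc_zero_one ⟨hτ.trans hp.1, hp.2⟩).2⟩

noncomputable def lpCost : ℝ := M.CL / (1 - M.β)

theorem CL_add_β_mul_lpCost : M.CL + M.β * M.lpCost = M.lpCost := by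
  have : 1 - M.β ≠ 0 := by linarith [M.β_lt_one]
  unfold lpCost; field_simp; ring

variable {M} {V : ℝ → ℝ}

theorem IsValue.le_LPval (hV : M.IsValue V) {p : ℝ} (hp : p ∈ Icc (0 : ℝ) 1) :
    V p ≤ M.LPval V p := by
  rw [hV.2 p hp]; exact min_le_left _ _

theorem IsValue.le_lpCost (hV : M.IsValue V) {p : ℝ} (hp : p ∈ Icc (0 : ℝ) 1) :
    V p ≤ M.lpCost := by
  obtain ⟨C, hC⟩ := hV.1
  have := nonpos_of_le_mul_comp (g := fun q => V q - M.lpCost) M.mapsTo_T_Icc_zero_one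
    (fun q hq => sub_le_sub_right (abs_le.mp (hC q hq)).2 _) M.β_pos.le M.β_lt_one
    (fun q hq => by
      have := hV.le_LPval hq
      unfold LPval at this; linarith [M.CL_add_β_mul_lpCost]) hp
  linarith

theorem IsThreshold.eq_lpCost_of_le_T (hV : M.IsValue V) {τ : ℝ} (hτ : M.IsThreshold V τ)
    (hT : τ ≤ M.T τ) {p : ℝ} (hp : p ∈ Icc τ 1) : V p = M.lpCost := by
  obtain ⟨C, hC⟩ := hV.1
  have hsub : Icc τ 1 ⊆ Icc (0 : ℝ) 1 := Icc_subset_Icc_left hτ.1.1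
  have hmaps := M.mapsTo_T_Icc_of_le_T hτ.1.1 hT
  have hstep : ∀ q ∈ Icc τ 1, V q - M.lpCost = M.β * (V (M.T q) - M.lpCost) := fun q hq => by
    rw [hτ.2.2 q hq, LPval]; linarith [M.CL_add_β_mul_lpCost]
  have hle := nonpos_of_le_mul_comp (g := fun q => V q - M.lpCost) hmaps
    (fun q hq => sub_le_sub_right (abs_le.mp (hC q (hsub hq))).2 _) M.β_pos.le M.β_lt_one
    (fun q hq => (hstep q hq).le) hp
  have hge := nonpos_of_le_mul_comp (g := fun q => M.lpCost - V q) hmaps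
    (fun q hq => sub_le_sub_left (abs_le.mp (hC q (hsub hq))).1 _) M.β_pos.le M.β_lt_one
    (fun q hq => by linarith [hstep q hq]) hp
  linarith

end CouponModel

/-- If `τ` is a threshold for `V` and `T(τ) ≥ τ`, then
`τ = (C_L/(1-β) - C_HN - β·V(λNA)) / δ` where
`δ = C_HA - C_HN + β·(V(λAA) - V(λNA))`. -/
theorem threshold_formula_of_T_ge (M : CouponModel) (hC : M.CHN < M.CHA)
    (V : ℝ → ℝ) (hV : M.IsValue V)
    (τ : ℝ) (hτ : M.IsThreshold V τ) (hT : τ ≤ M.T τ) :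
    τ = (M.CL / (1 - M.β) - M.CHN - M.β * V M.lNA)
      / (M.CHA - M.CHN + M.β * (V M.lAA - V M.lNA)) := by
  have hVτ : V τ = M.lpCost := hτ.eq_lpCost_of_le_T hV hT ⟨le_rfl, hτ.1.2⟩
  have hVAA : V M.lAA = M.lpCost :=
    hτ.eq_lpCost_of_le_T hV hT ⟨hT.trans (M.T_le_lAA hτ.1.2), M.lAA_le_one⟩
  have hVNA : V M.lNA ≤ M.lpCost :=
    hV.le_lpCost ⟨M.lNA_nonneg, M.lNA_le_lAA.trans M.lAA_le_one⟩
  have hHP : V τ = M.HPval V τ := hτ.2.1 τ ⟨hτ.1.1, le_rfl⟩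
  rw [CouponModel.HPval, hVτ, hVAA] at hHP
  have hδ : 0 < M.CHA - M.CHN + M.β * (V M.lAA - V M.lNA) := by
    rw [hVAA]; nlinarith [M.β_pos]
  rw [eq_div_iff hδ.ne', hVAA, ← CouponModel.lpCost]
  linear_combination -hHP
end

section
/- Assume C_HN < C_HA and set δ = C_HA − C_HN + β·(V(λAA) − V(λNA)). If τ ∈ [0,1] is a threshold for V and T(τ) ≤ τ, then τ = ( C_L + β·λNA·(C_HA + β·V(λAA)) − (1 − β·(1−λNA))·(C_HN + β·V(λNA)) ) / ( (1 − (λAA − λNA)·β) · δ ). -/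
/-- If `τ` is a threshold for `V` and `T(τ) ≤ τ`, then
`τ = (C_L + β·λNA·(C_HA + β·V(λAA)) - (1 - β·(1-λNA))·(C_HN + β·V(λNA)))
      / ((1 - (λAA - λNA)·β)·δ)` where
`δ = C_HA - C_HN + β·(V(λAA) - V(λNA))`. -/
theorem threshold_formula_of_T_le (M : CouponModel) (hC : M.CHN < M.CHA)
    (V : ℝ → ℝ) (hV : M.IsValue V)
    (τ : ℝ) (hτ : M.IsThreshold V τ) (hT : M.T τ ≤ τ) :
    τ = (M.CL + M.β * M.lNA * (M.CHA + M.β * V M.lAA)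
          - (1 - M.β * (1 - M.lNA)) * (M.CHN + M.β * V M.lNA))
      / ((1 - (M.lAA - M.lNA) * M.β)
          * (M.CHA - M.CHN + M.β * (V M.lAA - V M.lNA))) := by
  obtain ⟨⟨Cb, hCb⟩, hfix⟩ := hV
  obtain ⟨⟨hτ0, hτ1⟩, hHP, hLP⟩ := hτ
  have hβ0 := M.β_pos
  have hβ1 := M.β_lt_one
  have hl0 := M.lNA_nonneg
  have hl1 := M.lNA_le_lAA
  have hl2 := M.lAA_le_one
  have hNA : M.lNA ∈ Set.Icc (0:ℝ) 1 := ⟨hl0, le_trans hl1 hl2⟩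
  have hAA : M.lAA ∈ Set.Icc (0:ℝ) 1 := ⟨le_trans hl0 hl1, hl2⟩
  have hTmem : ∀ p ∈ Set.Icc (0:ℝ) 1, M.T p ∈ Set.Icc (0:ℝ) 1 := by
    rintro p ⟨hp0, hp1⟩
    constructor
    · simp only [CouponModel.T]; nlinarith
    · simp only [CouponModel.T]; nlinarith
  -- The set of gaps V p - V q for p ≤ q in [0,1]
  set Sset : Set ℝ :=
    {x | ∃ p q, p ∈ Set.Icc (0:ℝ) 1 ∧ q ∈ Set.Icc (0:ℝ) 1 ∧ p ≤ q ∧ x = V p - V q}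
    with hSsetdef
  have h0mem : Set.Icc (0:ℝ) 1 = Set.Icc (0:ℝ) 1 := rfl
  have hzero : (0:ℝ) ∈ Sset :=
    ⟨0, 0, ⟨le_refl 0, zero_le_one⟩, ⟨le_refl 0, zero_le_one⟩, le_refl 0, by ring⟩
  have hne : Sset.Nonempty := ⟨0, hzero⟩
  have hbdd : BddAbove Sset := by
    refine ⟨2 * Cb, ?_⟩
    rintro x ⟨p, q, hp, hq, hpq, rfl⟩
    have h1 := hCb p hp
    have h2 := hCb q hq
    have h1' := abs_le.1 h1
    have h2' := abs_le.1 h2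
    linarith [h1'.1, h1'.2, h2'.1, h2'.2]
  set S : ℝ := sSup Sset with hSdef
  have hS0 : 0 ≤ S := le_csSup hbdd hzero
  have hlamS : V M.lNA - V M.lAA ≤ S :=
    le_csSup hbdd ⟨M.lNA, M.lAA, hNA, hAA, hl1, rfl⟩
  have hkey : ∀ x ∈ Sset, x ≤ M.β * S := by
    rintro x ⟨p, q, hp, hq, hpq, rfl⟩
    have hBp := hfix p hp
    have hBq := hfix q hq
    have hTle : M.T p ≤ M.T q := by
      simp only [CouponModel.T]; nlinarith
    have hTS : V (M.T p) - V (M.T q) ≤ S :=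
      le_csSup hbdd ⟨M.T p, M.T q, hTmem p hp, hTmem q hq, hTle, rfl⟩
    rw [hBp, hBq]
    simp only [CouponModel.B]
    rcases le_total (M.CL + M.β * V (M.T q))
        ((1 - q) * M.CHN + q * M.CHA + M.β * ((1 - q) * V M.lNA + q * V M.lAA)) with h | h
    · rw [min_eq_left h]
      have hm := min_le_left (M.CL + M.β * V (M.T p))
        ((1 - p) * M.CHN + p * M.CHA + M.β * ((1 - p) * V M.lNA + p * V M.lAA))
      nlinarith [mul_le_mul_of_nonneg_left hTS hβ0.le]
    · rw [min_eq_right h]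
      have hm := min_le_right (M.CL + M.β * V (M.T p))
        ((1 - p) * M.CHN + p * M.CHA + M.β * ((1 - p) * V M.lNA + p * V M.lAA))
      have hq1 : q ≤ 1 := hq.2
      have hp0 : 0 ≤ p := hp.1
      have e1 : (q - p) * (V M.lNA - V M.lAA) ≤ (q - p) * S :=
        mul_le_mul_of_nonneg_left hlamS (by linarith)
      have e2 : (q - p) * S ≤ 1 * S :=
        mul_le_mul_of_nonneg_right (by linarith) hS0
      have e3 : (q - p) * M.CHN ≤ (q - p) * M.CHA :=
        mul_le_mul_of_nonneg_left hC.le (by linarith)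
      nlinarith [mul_le_mul_of_nonneg_left (e1.trans e2) hβ0.le]
  have hSle : S ≤ M.β * S := csSup_le hne hkey
  have hSneg : S ≤ 0 := by nlinarith
  have hmono : V M.lNA ≤ V M.lAA := by linarith
  have hδ : 0 < M.CHA - M.CHN + M.β * (V M.lAA - V M.lNA) := by nlinarith
  have hden1 : 0 < 1 - (M.lAA - M.lNA) * M.β := by nlinarith
  have hden : (1 - (M.lAA - M.lNA) * M.β)
      * (M.CHA - M.CHN + M.β * (V M.lAA - V M.lNA)) ≠ 0 :=
    ne_of_gt (mul_pos hden1 hδ)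
  have e1 : V τ = M.HPval V τ := hHP τ ⟨hτ0, le_refl τ⟩
  have e2 : V τ = M.LPval V τ := hLP τ ⟨le_refl τ, hτ1⟩
  have hTτ0 : 0 ≤ M.T τ := by
    simp only [CouponModel.T]; nlinarith
  have e3 : V (M.T τ) = M.HPval V (M.T τ) := hHP (M.T τ) ⟨hTτ0, hT⟩
  simp only [CouponModel.HPval, CouponModel.LPval, CouponModel.T] at e1 e2 e3
  rw [eq_div_iff hden]
  linear_combination (e2 - e1) + M.β * e3
end

section
/- Assume C_HN < C_HA and set κ = (C_L − C_HN)/(C_HA − C_HN). If λNA ≥ κ and τ ∈ [0,1] is a threshold for V, then τ = κ. -/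
/-!
On `[κ, 1]` LP is at least as cheap as HP immediately, and when `κ ≤ λNA` this interval contains
`λNA`, `λAA` and the image of `T`. So the Bellman operator restricted to `[κ, 1]` is a contraction
fixing the constant `C_L / (1 - β)` (offer LP forever), and `V` equals that constant there. At a
threshold `τ` both actions are optimal, and since all continuation values then equal the same
constant, the immediate costs agree: `(1 - τ) C_HN + τ C_HA = C_L`, i.e. `τ = κ`.
-/

lemma Set.eqOn_zero_of_abs_bound_contracts {α : Type*} {s : Set α} {u : α → ℝ} {β C : ℝ}
    (hβ₀ : 0 ≤ β) (hβ₁ : β < 1) (hC : ∀ x ∈ s, |u x| ≤ C)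
    (hcontract : ∀ D, (∀ x ∈ s, |u x| ≤ D) → ∀ x ∈ s, |u x| ≤ β * D) :
    Set.EqOn u 0 s := by
  have hpow : ∀ n : ℕ, ∀ x ∈ s, |u x| ≤ β ^ n * C := by
    intro n
    induction n with
    | zero => simpa using hC
    | succ n ih =>
      intro x hx
      simpa [pow_succ, mul_comm, mul_assoc, mul_left_comm] using hcontract _ ih x hx
  intro x hx
  have hlim : Filter.Tendsto (fun n : ℕ => β ^ n * C) Filter.atTop (nhds 0) := by
    simpa using (tendsto_pow_atTop_nhds_zero_of_lt_one hβ₀ hβ₁).mul_const C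
  have hle : |u x| ≤ 0 := ge_of_tendsto' hlim fun n => hpow n x hx
  exact abs_nonpos_iff.mp hle

lemma abs_convex_combo_le {a b D p : ℝ} (hp : p ∈ Set.Icc (0 : ℝ) 1) (ha : |a| ≤ D)
    (hb : |b| ≤ D) : |(1 - p) * a + p * b| ≤ D := by
  obtain ⟨hp₀, hp₁⟩ := hp
  calc |(1 - p) * a + p * b| ≤ (1 - p) * |a| + p * |b| := by
        refine (abs_add_le _ _).trans_eq ?_
        rw [abs_mul, abs_mul, abs_of_nonneg (sub_nonneg.mpr hp₁), abs_of_nonneg hp₀]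
    _ ≤ (1 - p) * D + p * D := by gcongr
    _ = D := by ring

namespace CouponModel

variable (M : CouponModel)

/-- The belief `κ` at which the immediate HP cost `(1 - p) C_HN + p C_HA` equals `C_L`. -/
noncomputable def kappa : ℝ := (M.CL - M.CHN) / (M.CHA - M.CHN)

/-- The discounted cost `C_L / (1 - β)` of offering LP forever. -/
noncomputable def lpForever : ℝ := M.CL / (1 - M.β)

lemma CL_add_β_mul_lpForever : M.CL + M.β * M.lpForever = M.lpForever := by
  have : 1 - M.β ≠ 0 := by linarith [M.β_lt_one]
  unfold lpForever
  field_simp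
  ring

lemma kappa_nonneg (hC : M.CHN < M.CHA) : 0 ≤ M.kappa :=
  div_nonneg (by linarith [M.CHN_le_CL]) (by linarith)

lemma CL_le_cost_iff_kappa_le (hC : M.CHN < M.CHA) {p : ℝ} :
    M.CL ≤ (1 - p) * M.CHN + p * M.CHA ↔ M.kappa ≤ p := by
  rw [kappa, div_le_iff₀ (by linarith)]
  constructor <;> intro h <;> linarith

lemma cost_eq_CL_iff (hC : M.CHN < M.CHA) {p : ℝ} :
    (1 - p) * M.CHN + p * M.CHA = M.CL ↔ p = M.kappa := by
  rw [kappa, eq_div_iff (by linarith)]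
  constructor <;> intro h <;> linarith

lemma T_mem_Icc {p : ℝ} (hp : p ∈ Set.Icc (0 : ℝ) 1) : M.T p ∈ Set.Icc M.lNA M.lAA := by
  obtain ⟨hp₀, hp₁⟩ := hp
  have := M.lNA_le_lAA
  constructor <;> unfold T <;> nlinarith

lemma lNA_mem_Icc_kappa (hκ : M.kappa ≤ M.lNA) : M.lNA ∈ Set.Icc M.kappa 1 :=
  ⟨hκ, M.lNA_le_lAA.trans M.lAA_le_one⟩

lemma lAA_mem_Icc_kappa (hκ : M.kappa ≤ M.lNA) : M.lAA ∈ Set.Icc M.kappa 1 :=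
  ⟨hκ.trans M.lNA_le_lAA, M.lAA_le_one⟩

lemma T_mem_Icc_kappa (hκ : M.kappa ≤ M.lNA) {p : ℝ} (hp : p ∈ Set.Icc (0 : ℝ) 1) :
    M.T p ∈ Set.Icc M.kappa 1 :=
  Set.Icc_subset_Icc hκ M.lAA_le_one (M.T_mem_Icc hp)

lemma abs_B_sub_B_le {f g : ℝ → ℝ} {D p : ℝ} (hp : p ∈ Set.Icc (0 : ℝ) 1)
    (hT : |f (M.T p) - g (M.T p)| ≤ D) (hNA : |f M.lNA - g M.lNA| ≤ D)
    (hAA : |f M.lAA - g M.lAA| ≤ D) :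
    |M.B f p - M.B g p| ≤ M.β * D := by
  have hβ := M.β_pos.le
  refine (abs_min_sub_min_le_max _ _ _ _).trans (max_le ?_ ?_)
  · rw [show M.CL + M.β * f (M.T p) - (M.CL + M.β * g (M.T p))
        = M.β * (f (M.T p) - g (M.T p)) by ring, abs_mul, abs_of_nonneg hβ]
    gcongr
  · rw [show (1 - p) * M.CHN + p * M.CHA + M.β * ((1 - p) * f M.lNA + p * f M.lAA)
          - ((1 - p) * M.CHN + p * M.CHA + M.β * ((1 - p) * g M.lNA + p * g M.lAA))
        = M.β * ((1 - p) * (f M.lNA - g M.lNA) + p * (f M.lAA - g M.lAA)) by ring,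
      abs_mul, abs_of_nonneg hβ]
    gcongr
    exact abs_convex_combo_le hp hNA hAA

lemma B_const_lpForever (hC : M.CHN < M.CHA) {p : ℝ} (hp : M.kappa ≤ p) :
    M.B (fun _ => M.lpForever) p = M.lpForever := by
  have hcost := (M.CL_le_cost_iff_kappa_le hC).mpr hp
  rw [B, show (1 - p) * M.lpForever + p * M.lpForever = M.lpForever by ring,
    CL_add_β_mul_lpForever, min_eq_left]
  linarith [M.CL_add_β_mul_lpForever]

lemma value_eq_lpForever (hC : M.CHN < M.CHA) {V : ℝ → ℝ} (hV : M.IsValue V)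
    (hκ : M.kappa ≤ M.lNA) : Set.EqOn V (fun _ => M.lpForever) (Set.Icc M.kappa 1) := by
  obtain ⟨⟨C, hCV⟩, hfix⟩ := hV
  have hunit : Set.Icc M.kappa 1 ⊆ Set.Icc 0 1 :=
    Set.Icc_subset_Icc_left (M.kappa_nonneg hC)
  have hzero : Set.EqOn (fun q => V q - M.lpForever) 0 (Set.Icc M.kappa 1) := by
    refine Set.eqOn_zero_of_abs_bound_contracts M.β_pos.le M.β_lt_one
      (C := C + |M.lpForever|) (fun q hq => ?_) (fun D hD q hq => ?_)
    · exact (abs_sub _ _).trans (by linarith [hCV q (hunit hq)])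
    · have := M.abs_B_sub_B_le (f := V) (g := fun _ => M.lpForever) (hunit hq)
        (hD _ (M.T_mem_Icc_kappa hκ (hunit hq))) (hD _ (M.lNA_mem_Icc_kappa hκ))
        (hD _ (M.lAA_mem_Icc_kappa hκ))
      rwa [← hfix q (hunit hq), M.B_const_lpForever hC hq.1] at this
  exact fun q hq => sub_eq_zero.mp (hzero hq)

end CouponModel

/-- If `λNA ≥ κ = (C_L - C_HN)/(C_HA - C_HN)` and `τ` is a threshold for `V`,
then `τ = κ`. -/
theorem threshold_eq_kappa (M : CouponModel) (hC : M.CHN < M.CHA)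
    (V : ℝ → ℝ) (hV : M.IsValue V)
    (hκ : (M.CL - M.CHN) / (M.CHA - M.CHN) ≤ M.lNA)
    (τ : ℝ) (hτ : M.IsThreshold V τ) :
    τ = (M.CL - M.CHN) / (M.CHA - M.CHN) := by
  obtain ⟨hτ01, hHP, hLP⟩ := hτ
  have hVc := M.value_eq_lpForever hC hV hκ
  have hNA : V M.lNA = M.lpForever := hVc (M.lNA_mem_Icc_kappa hκ)
  have hAA : V M.lAA = M.lpForever := hVc (M.lAA_mem_Icc_kappa hκ)
  have hT : V (M.T τ) = M.lpForever := hVc (M.T_mem_Icc_kappa hκ hτ01)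
  have hHPτ : V τ = M.HPval V τ := hHP τ ⟨hτ01.1, le_rfl⟩
  have hLPτ : V τ = M.LPval V τ := hLP τ ⟨le_rfl, hτ01.2⟩
  rw [CouponModel.HPval, hNA, hAA] at hHPτ
  rw [CouponModel.LPval, hT] at hLPτ
  refine (M.cost_eq_CL_iff hC).mp ?_
  linarith
end

section
/- Assume C_HN < C_HA. If τ ∈ [0,1] is a threshold for V with λNA < τ and T(τ) ≥ τ, then τ = ( β·(C_L − C_HA)·λNA + C_L − C_HN ) / ( (1−β)·C_HA − C_HN + β·C_L ). -/
/-- If `τ` is a threshold for `V` with `λNA < τ` and `T(τ) ≥ τ`, then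
`τ = (β·(C_L - C_HA)·λNA + C_L - C_HN) / ((1-β)·C_HA - C_HN + β·C_L)`. -/
theorem threshold_closed_form (M : CouponModel) (hC : M.CHN < M.CHA)
    (V : ℝ → ℝ) (hV : M.IsValue V)
    (τ : ℝ) (hτ : M.IsThreshold V τ) (hlt : M.lNA < τ) (hT : τ ≤ M.T τ) :
    τ = (M.β * (M.CL - M.CHA) * M.lNA + M.CL - M.CHN)
      / ((1 - M.β) * M.CHA - M.CHN + M.β * M.CL) := by
  obtain ⟨⟨C0, hC0⟩, _⟩ := hV
  obtain ⟨⟨hτ0, hτ1⟩, hHP, hLP⟩ := hτ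
  have hβ0 := M.β_pos
  have hβ1 := M.β_lt_one
  have h1β : (0:ℝ) < 1 - M.β := by linarith
  have hn0 := M.lNA_nonneg
  have hnA := M.lNA_le_lAA
  have hA1 := M.lAA_le_one
  have hτpos : 0 < τ := lt_of_le_of_lt hn0 hlt
  -- λAA ≥ τ
  have hAτ : τ ≤ M.lAA := by
    have h := hT
    simp only [CouponModel.T] at h
    nlinarith [mul_nonneg (sub_nonneg.2 hτ1) (sub_nonneg.2 hlt.le)]
  -- T maps [τ,1] into [τ,1]
  have hstep : ∀ p, τ ≤ p → p ≤ 1 → τ ≤ M.T p ∧ M.T p ≤ 1 := by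
    intro p hp1 hp2
    constructor
    · have : M.T τ ≤ M.T p := by
        simp only [CouponModel.T]; nlinarith
      linarith [hT]
    · simp only [CouponModel.T]; nlinarith
  obtain ⟨K, hKdef⟩ : ∃ K : ℝ, K = M.CL / (1 - M.β) := ⟨_, rfl⟩
  have hKL : (1 - M.β) * K = M.CL := by
    rw [hKdef]; field_simp
  have hK : K = M.CL + M.β * K := by linarith
  -- LP equation on [τ,1]
  have hLPeq : ∀ p, τ ≤ p → p ≤ 1 → V p - K = M.β * (V (M.T p) - K) := by
    intro p hp1 hp2
    have := hLP p ⟨hp1, hp2⟩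
    simp only [CouponModel.LPval] at this
    rw [this]; linarith
  -- iteration
  have hiter : ∀ n : ℕ, ∀ p, τ ≤ p → p ≤ 1 →
      (τ ≤ M.T^[n] p ∧ M.T^[n] p ≤ 1) ∧ V p - K = M.β ^ n * (V (M.T^[n] p) - K) := by
    intro n
    induction n with
    | zero => intro p hp1 hp2; simp [hp1, hp2]
    | succ n ih =>
      intro p hp1 hp2
      obtain ⟨hq1, hq2⟩ := hstep p hp1 hp2
      obtain ⟨hmem, heq⟩ := ih (M.T p) hq1 hq2
      refine ⟨by rw [Function.iterate_succ_apply]; exact hmem, ?_⟩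
      rw [Function.iterate_succ_apply, hLPeq p hp1 hp2, heq, pow_succ]; ring
  -- V = K on [τ,1]
  have hVK : ∀ p, τ ≤ p → p ≤ 1 → V p = K := by
    intro p hp1 hp2
    have hb : ∀ n : ℕ, |V p - K| ≤ M.β ^ n * (C0 + |K|) := by
      intro n
      obtain ⟨⟨hq1, hq2⟩, heq⟩ := hiter n p hp1 hp2
      rw [heq, abs_mul, abs_pow, abs_of_pos hβ0]
      have h1 : |V (M.T^[n] p) - K| ≤ C0 + |K| := by
        have := hC0 (M.T^[n] p) ⟨le_trans hτpos.le hq1, hq2⟩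
        calc |V (M.T^[n] p) - K| ≤ |V (M.T^[n] p)| + |K| := abs_sub _ _
          _ ≤ C0 + |K| := by linarith
      exact mul_le_mul_of_nonneg_left h1 (pow_nonneg hβ0.le n)
    have htend : Filter.Tendsto (fun n : ℕ => M.β ^ n * (C0 + |K|)) Filter.atTop (nhds 0) := by
      simpa using (tendsto_pow_atTop_nhds_zero_of_lt_one hβ0.le hβ1).mul_const (C0 + |K|)
    have h0 : |V p - K| ≤ 0 := ge_of_tendsto' htend hb
    have := abs_nonneg (V p - K)
    have : |V p - K| = 0 := le_antisymm h0 this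
    have := abs_eq_zero.mp this
    linarith
  -- key values
  have hVAA : V M.lAA = K := hVK M.lAA hAτ hA1
  have hVTτ : V (M.T τ) = K := hVK (M.T τ) hT (hstep τ le_rfl hτ1).2
  -- V λNA equation
  have h1 : V M.lNA = (1 - M.lNA) * M.CHN + M.lNA * M.CHA
      + M.β * ((1 - M.lNA) * V M.lNA + M.lNA * K) := by
    have := hHP M.lNA ⟨hn0, hlt.le⟩
    simp only [CouponModel.HPval] at this
    rw [hVAA] at this
    exact this
  -- equality at τ
  have h2 : (1 - τ) * M.CHN + τ * M.CHA + M.β * ((1 - τ) * V M.lNA + τ * K)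
      = M.CL + M.β * K := by
    have hH := hHP τ ⟨hτpos.le, le_rfl⟩
    have hL := hLP τ ⟨le_rfl, hτ1⟩
    simp only [CouponModel.HPval] at hH
    simp only [CouponModel.LPval] at hL
    rw [hVAA] at hH
    rw [hVTτ] at hL
    rw [← hH, ← hL]
  -- linear algebra
  have hden : (1 - M.β) * M.CHA - M.CHN + M.β * M.CL ≠ 0 := by
    have := M.CHN_le_CL
    nlinarith
  rw [eq_div_iff hden]
  set a := V M.lNA
  set b := M.β
  set n := M.lNA
  set H := M.CHN
  set A := M.CHA
  set L := M.CL
  have key : (1 - b) * (τ * ((1 - b) * A - H + b * L) - (b * (L - A) * n + L - H)) = 0 := by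
    linear_combination (1 - b) * ((1 - b + b * n) * h2 - b * (1 - τ) * h1 + b * (1 - τ) * hKL)
  have := mul_eq_zero.mp key
  rcases this with h | h
  · linarith
  · linarith
end

section
/- The coupon-dependent Bellman operator B' is a contraction with Lipschitz constant β on the space of bounded functions [0,1] → ℝ with the supremum metric, and its unique bounded fixed point V' is concave and nondecreasing on [0,1]. -/
/-- Two-state consumer model with coupon-dependent transitions:
LP transitions `lNA ≤ lAA`, HP transitions `lNA' ≤ lAA'` with `lNA < lNA'`
and `lAA < lAA'`, costs `CHN ≤ CL ≤ CHA`, discount factor `β ∈ (0,1)`. -/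
structure CouponModelDep where
  lNA : ℝ
  lAA : ℝ
  lNA' : ℝ
  lAA' : ℝ
  CHN : ℝ
  CL : ℝ
  CHA : ℝ
  β : ℝ
  lNA_nonneg : 0 ≤ lNA
  lNA_le_lAA : lNA ≤ lAA
  lAA_le_one : lAA ≤ 1
  lNA'_nonneg : 0 ≤ lNA'
  lNA'_le_lAA' : lNA' ≤ lAA'
  lAA'_le_one : lAA' ≤ 1
  lNA_lt_lNA' : lNA < lNA'
  lAA_lt_lAA' : lAA < lAA'
  CHN_le_CL : CHN ≤ CL
  CL_le_CHA : CL ≤ CHA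
  β_pos : 0 < β
  β_lt_one : β < 1

namespace CouponModelDep

/-- Belief-update map under an LP coupon: `T(p) = (1-p)·λNA + p·λAA`. -/
noncomputable def T (M : CouponModelDep) (p : ℝ) : ℝ := (1 - p) * M.lNA + p * M.lAA

/-- Belief-update map under an HP coupon: `T'(p) = (1-p)·λ'NA + p·λ'AA`. -/
noncomputable def T' (M : CouponModelDep) (p : ℝ) : ℝ := (1 - p) * M.lNA' + p * M.lAA'

/-- Coupon-dependent Bellman operator. -/
noncomputable def B (M : CouponModelDep) (f : ℝ → ℝ) (p : ℝ) : ℝ :=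
  min (M.CL + M.β * f (M.T p))
    ((1 - p) * M.CHN + p * M.CHA + M.β * ((1 - p) * f M.lNA' + p * f M.lAA'))

/-- A function `f : ℝ → ℝ` is bounded on the belief space `[0,1]`. -/
def IsBdd (f : ℝ → ℝ) : Prop := ∃ C : ℝ, ∀ p ∈ Set.Icc (0:ℝ) 1, |f p| ≤ C

/-- `V` is a bounded fixed point of the coupon-dependent Bellman operator on `[0,1]`. -/
def IsValue (M : CouponModelDep) (V : ℝ → ℝ) : Prop :=
  IsBdd V ∧ ∀ p ∈ Set.Icc (0:ℝ) 1, V p = M.B V p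

/-- Value of offering the low-privacy coupon at belief `p`. -/
noncomputable def LPval (M : CouponModelDep) (V : ℝ → ℝ) (p : ℝ) : ℝ :=
  M.CL + M.β * V (M.T p)

/-- Value of offering the high-privacy coupon at belief `p`. -/
noncomputable def HPval (M : CouponModelDep) (V : ℝ → ℝ) (p : ℝ) : ℝ :=
  (1 - p) * M.CHN + p * M.CHA + M.β * ((1 - p) * V M.lNA' + p * V M.lAA')

end CouponModelDep

open Filter Topology

namespace CouponModelDep

variable (M : CouponModelDep)

lemma β_nonneg : (0:ℝ) ≤ M.β := le_of_lt M.β_pos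

lemma T_mem {p : ℝ} (hp : p ∈ Set.Icc (0:ℝ) 1) : M.T p ∈ Set.Icc (0:ℝ) 1 := by
  obtain ⟨h0, h1⟩ := hp
  have h2 := M.lNA_nonneg
  have h3 := M.lNA_le_lAA
  have h4 := M.lAA_le_one
  unfold T
  constructor <;> nlinarith

lemma lNA'_mem : M.lNA' ∈ Set.Icc (0:ℝ) 1 :=
  ⟨M.lNA'_nonneg, M.lNA'_le_lAA'.trans M.lAA'_le_one⟩

lemma lAA'_mem : M.lAA' ∈ Set.Icc (0:ℝ) 1 :=
  ⟨M.lNA'_nonneg.trans M.lNA'_le_lAA', M.lAA'_le_one⟩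

/-- Convex combination bound. -/
lemma combo_abs {p u v C : ℝ} (hp0 : 0 ≤ p) (hp1 : p ≤ 1) (hu : |u| ≤ C) (hv : |v| ≤ C) :
    |(1 - p) * u + p * v| ≤ C := by
  rw [abs_le] at *
  constructor <;> nlinarith

/-- The contraction estimate (no boundedness needed). -/
lemma contract (f g : ℝ → ℝ) (D : ℝ)
    (hD : ∀ p ∈ Set.Icc (0:ℝ) 1, |f p - g p| ≤ D) :
    ∀ p ∈ Set.Icc (0:ℝ) 1, |M.B f p - M.B g p| ≤ M.β * D := by
  intro p hp
  have h1 := hD _ (M.T_mem hp)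
  have h2 := hD _ M.lNA'_mem
  have h3 := hD _ M.lAA'_mem
  have hb := M.β_nonneg
  obtain ⟨hp0, hp1⟩ := hp
  unfold B
  refine (abs_min_sub_min_le_max _ _ _ _).trans (max_le ?_ ?_)
  · have e : (M.CL + M.β * f (M.T p)) - (M.CL + M.β * g (M.T p))
        = M.β * (f (M.T p) - g (M.T p)) := by ring
    rw [e, abs_mul, abs_of_nonneg hb]
    exact mul_le_mul_of_nonneg_left h1 hb
  · have e : ((1 - p) * M.CHN + p * M.CHA + M.β * ((1 - p) * f M.lNA' + p * f M.lAA'))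
        - ((1 - p) * M.CHN + p * M.CHA + M.β * ((1 - p) * g M.lNA' + p * g M.lAA'))
        = M.β * ((1 - p) * (f M.lNA' - g M.lNA') + p * (f M.lAA' - g M.lAA')) := by ring
    rw [e, abs_mul, abs_of_nonneg hb]
    exact mul_le_mul_of_nonneg_left (combo_abs hp0 hp1 h2 h3) hb

/-- `B` maps functions bounded by `C` on `[0,1]` to bounded functions. -/
lemma B_bdd_explicit (f : ℝ → ℝ) (C : ℝ) (hC : ∀ p ∈ Set.Icc (0:ℝ) 1, |f p| ≤ C) :
    ∀ p ∈ Set.Icc (0:ℝ) 1,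
      |M.B f p| ≤ |M.CL| + (|M.CHN| + |M.CHA|) + M.β * C := by
  intro p hp
  have h1 := hC _ (M.T_mem hp)
  have h2 := hC _ M.lNA'_mem
  have h3 := hC _ M.lAA'_mem
  have hb := M.β_nonneg
  have hCnn : 0 ≤ C := (abs_nonneg _).trans h2
  obtain ⟨hp0, hp1⟩ := hp
  have hLP : |M.CL + M.β * f (M.T p)| ≤ |M.CL| + M.β * C := by
    refine (abs_add_le _ _).trans ?_
    rw [abs_mul, abs_of_nonneg hb]
    have := mul_le_mul_of_nonneg_left h1 hb
    linarith
  have hin : |(1 - p) * f M.lNA' + p * f M.lAA'| ≤ C := combo_abs hp0 hp1 h2 h3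
  have hHP : |(1 - p) * M.CHN + p * M.CHA + M.β * ((1 - p) * f M.lNA' + p * f M.lAA')|
      ≤ |M.CHN| + |M.CHA| + M.β * C := by
    refine (abs_add_le _ _).trans ?_
    have ha : |(1 - p) * M.CHN + p * M.CHA| ≤ |M.CHN| + |M.CHA| := by
      refine (abs_add_le _ _).trans ?_
      rw [abs_mul, abs_mul]
      have e1 : |1 - p| = 1 - p := abs_of_nonneg (by linarith)
      have e2 : |p| = p := abs_of_nonneg hp0
      rw [e1, e2]
      have := abs_nonneg M.CHN
      have := abs_nonneg M.CHA
      nlinarith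
    have hc : |M.β * ((1 - p) * f M.lNA' + p * f M.lAA')| ≤ M.β * C := by
      rw [abs_mul, abs_of_nonneg hb]
      exact mul_le_mul_of_nonneg_left hin hb
    linarith
  rw [abs_le] at hLP hHP ⊢
  unfold B
  have hCL := abs_nonneg M.CL
  have hCHN := abs_nonneg M.CHN
  have hCHA := abs_nonneg M.CHA
  constructor
  · exact le_min (by linarith [hLP.1]) (by linarith [hHP.1])
  · exact (min_le_left _ _).trans (by linarith [hLP.2])

lemma B_bdd (f : ℝ → ℝ) (hf : IsBdd f) : IsBdd (M.B f) := by
  obtain ⟨C, hC⟩ := hf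
  exact ⟨_, M.B_bdd_explicit f C hC⟩

lemma T_affine {a b x y : ℝ} (hab : a + b = 1) :
    M.T (a * x + b * y) = a * M.T x + b * M.T y := by
  have hb' : b = 1 - a := by linarith
  subst hb'
  unfold T; ring

lemma B_mono (f : ℝ → ℝ) (hm : MonotoneOn f (Set.Icc (0:ℝ) 1)) :
    MonotoneOn (M.B f) (Set.Icc (0:ℝ) 1) := by
  intro x hx y hy hxy
  have hT : M.T x ≤ M.T y := by
    have := M.lNA_le_lAA; unfold T; nlinarith
  have hfT : f (M.T x) ≤ f (M.T y) := hm (M.T_mem hx) (M.T_mem hy) hT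
  have hf' : f M.lNA' ≤ f M.lAA' := hm M.lNA'_mem M.lAA'_mem M.lNA'_le_lAA'
  have hb := M.β_nonneg
  have hC : M.CHN ≤ M.CHA := M.CHN_le_CL.trans M.CL_le_CHA
  refine min_le_min (by nlinarith) ?_
  have hyx : 0 ≤ y - x := by linarith
  nlinarith [mul_nonneg hyx (sub_nonneg.2 hC), mul_nonneg hb (mul_nonneg hyx (sub_nonneg.2 hf'))]

lemma B_concave (f : ℝ → ℝ) (hm : ConcaveOn ℝ (Set.Icc (0:ℝ) 1) f) :
    ConcaveOn ℝ (Set.Icc (0:ℝ) 1) (M.B f) := by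
  refine ⟨convex_Icc 0 1, ?_⟩
  intro x hx y hy a b ha hb hab
  simp only [smul_eq_mul]
  have hz : a * x + b * y ∈ Set.Icc (0:ℝ) 1 := by
    have := (convex_Icc (0:ℝ) 1) hx hy ha hb hab
    simpa using this
  have hβ := M.β_nonneg
  refine le_min ?_ ?_
  · -- LP branch
    have hcav := hm.2 (M.T_mem hx) (M.T_mem hy) ha hb hab
    simp only [smul_eq_mul] at hcav
    have hTa := M.T_affine (x := x) (y := y) hab
    have h1 : a * M.B f x ≤ a * (M.CL + M.β * f (M.T x)) :=
      mul_le_mul_of_nonneg_left (min_le_left _ _) ha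
    have h2 : b * M.B f y ≤ b * (M.CL + M.β * f (M.T y)) :=
      mul_le_mul_of_nonneg_left (min_le_left _ _) hb
    have : a * (M.CL + M.β * f (M.T x)) + b * (M.CL + M.β * f (M.T y))
        ≤ M.CL + M.β * f (M.T (a * x + b * y)) := by
      rw [hTa]
      have h4 := mul_le_mul_of_nonneg_left hcav hβ
      have hCL : a * M.CL + b * M.CL = M.CL := by rw [← add_mul, hab, one_mul]
      linarith
    linarith
  · -- HP branch, affine
    have h1 : a * M.B f x ≤ a * ((1 - x) * M.CHN + x * M.CHA
        + M.β * ((1 - x) * f M.lNA' + x * f M.lAA')) :=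
      mul_le_mul_of_nonneg_left (min_le_right _ _) ha
    have h2 : b * M.B f y ≤ b * ((1 - y) * M.CHN + y * M.CHA
        + M.β * ((1 - y) * f M.lNA' + y * f M.lAA')) :=
      mul_le_mul_of_nonneg_left (min_le_right _ _) hb
    have haff : a * ((1 - x) * M.CHN + x * M.CHA
          + M.β * ((1 - x) * f M.lNA' + x * f M.lAA'))
        + b * ((1 - y) * M.CHN + y * M.CHA
          + M.β * ((1 - y) * f M.lNA' + y * f M.lAA'))
        = (1 - (a * x + b * y)) * M.CHN + (a * x + b * y) * M.CHA
          + M.β * ((1 - (a * x + b * y)) * f M.lNA' + (a * x + b * y) * f M.lAA') := by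
      have hb' : b = 1 - a := by linarith
      subst hb'; ring
    linarith [haff ▸ add_le_add h1 h2]

/-- Picard iterates starting from 0. -/
noncomputable def seqIter (M : CouponModelDep) : ℕ → ℝ → ℝ
  | 0 => fun _ => 0
  | n + 1 => M.B (seqIter M n)

/-- Explicit geometric bound for successive iterates. -/
noncomputable def Kc (M : CouponModelDep) : ℝ := |M.CL| + (|M.CHN| + |M.CHA|)

lemma seqIter_step (n : ℕ) :
    ∀ p ∈ Set.Icc (0:ℝ) 1, |M.seqIter n p - M.seqIter (n+1) p| ≤ M.Kc * M.β ^ n := by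
  induction n with
  | zero =>
    intro p hp
    have h := M.B_bdd_explicit (fun _ => 0) 0 (by intro q hq; simp) p hp
    simp only [mul_zero, add_zero] at h
    have : |M.seqIter 0 p - M.seqIter 1 p| = |M.B (fun _ => 0) p| := by
      simp [seqIter, abs_sub_comm]
    rw [this]
    simpa [Kc] using h
  | succ n ih =>
    intro p hp
    have := M.contract (M.seqIter n) (M.seqIter (n+1)) (M.Kc * M.β ^ n) ih p hp
    calc |M.seqIter (n+1) p - M.seqIter (n+2) p|
        = |M.B (M.seqIter n) p - M.B (M.seqIter (n+1)) p| := by simp [seqIter]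
      _ ≤ M.β * (M.Kc * M.β ^ n) := this
      _ = M.Kc * M.β ^ (n+1) := by ring

lemma seqIter_cauchy {p : ℝ} (hp : p ∈ Set.Icc (0:ℝ) 1) :
    CauchySeq (fun n => M.seqIter n p) :=
  cauchySeq_of_le_geometric M.β M.Kc M.β_lt_one
    (fun n => by rw [Real.dist_eq]; exact M.seqIter_step n p hp)

open scoped Classical in
/-- The candidate value function. -/
noncomputable def Vfix (M : CouponModelDep) (p : ℝ) : ℝ :=
  if h : ∃ a : ℝ, Tendsto (fun n => M.seqIter n p) atTop (𝓝 a) then h.choose else 0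

lemma tendsto_Vfix {p : ℝ} (hp : p ∈ Set.Icc (0:ℝ) 1) :
    Tendsto (fun n => M.seqIter n p) atTop (𝓝 (M.Vfix p)) := by
  have h : ∃ a : ℝ, Tendsto (fun n => M.seqIter n p) atTop (𝓝 a) :=
    cauchySeq_tendsto_of_complete (M.seqIter_cauchy hp)
  classical
  rw [Vfix]
  rw [dif_pos h]
  exact h.choose_spec

lemma Vfix_dist (n : ℕ) {p : ℝ} (hp : p ∈ Set.Icc (0:ℝ) 1) :
    |M.seqIter n p - M.Vfix p| ≤ M.Kc * M.β ^ n / (1 - M.β) := by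
  rw [← Real.dist_eq]
  exact dist_le_of_le_geometric_of_tendsto M.β M.Kc M.β_lt_one
    (fun m => by rw [Real.dist_eq]; exact M.seqIter_step m p hp) (M.tendsto_Vfix hp) n

lemma Dtendsto (c : ℝ) : Tendsto (fun n : ℕ => c * M.β ^ n) atTop (𝓝 0) := by
  have h := tendsto_pow_atTop_nhds_zero_of_lt_one M.β_nonneg M.β_lt_one
  simpa using h.const_mul c

end CouponModelDep

/-- The coupon-dependent Bellman operator maps bounded functions to bounded
functions and is a `β`-contraction for the supremum metric on bounded functions
on `[0,1]`; its unique bounded fixed point is concave and nondecreasing on `[0,1]`. -/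
theorem dep_bellman_contraction_value_concave_monotone (M : CouponModelDep) :
    (∀ f : ℝ → ℝ, CouponModelDep.IsBdd f → CouponModelDep.IsBdd (M.B f)) ∧
    (∀ f g : ℝ → ℝ, CouponModelDep.IsBdd f → CouponModelDep.IsBdd g → ∀ D : ℝ,
      (∀ p ∈ Set.Icc (0:ℝ) 1, |f p - g p| ≤ D) →
      ∀ p ∈ Set.Icc (0:ℝ) 1, |M.B f p - M.B g p| ≤ M.β * D) ∧
    (∃ V : ℝ → ℝ, M.IsValue V ∧
      (∀ W : ℝ → ℝ, M.IsValue W → ∀ p ∈ Set.Icc (0:ℝ) 1, W p = V p) ∧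
      ConcaveOn ℝ (Set.Icc (0:ℝ) 1) V ∧ MonotoneOn V (Set.Icc (0:ℝ) 1)) := by
  refine ⟨M.B_bdd, fun f g _ _ D hD => M.contract f g D hD, ?_⟩
  have hβ := M.β_nonneg
  -- boundedness of the candidate value function
  have hVbdd : CouponModelDep.IsBdd M.Vfix := by
    refine ⟨M.Kc * M.β ^ 0 / (1 - M.β), fun p hp => ?_⟩
    have h := M.Vfix_dist 0 hp
    have e : M.seqIter 0 p - M.Vfix p = -(M.Vfix p) := by simp [CouponModelDep.seqIter]
    rw [e, abs_neg] at h
    exact h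
  -- fixed point property
  have hfix : ∀ p ∈ Set.Icc (0:ℝ) 1, M.Vfix p = M.B M.Vfix p := by
    intro p hp
    have key : ∀ n : ℕ, |M.Vfix p - M.B M.Vfix p|
        ≤ (M.Kc * M.β / (1 - M.β) + M.β * M.Kc / (1 - M.β)) * M.β ^ n := by
      intro n
      have h1 : |M.seqIter (n+1) p - M.B M.Vfix p| ≤ M.β * (M.Kc * M.β ^ n / (1 - M.β)) := by
        have := M.contract (M.seqIter n) M.Vfix (M.Kc * M.β ^ n / (1 - M.β))
          (fun q hq => M.Vfix_dist n hq) p hp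
        simpa [CouponModelDep.seqIter] using this
      have h2 := M.Vfix_dist (n+1) hp
      have h3 := abs_sub_le (M.Vfix p) (M.seqIter (n+1) p) (M.B M.Vfix p)
      rw [abs_sub_comm (M.Vfix p) (M.seqIter (n+1) p)] at h3
      have e : M.Kc * M.β ^ (n+1) / (1 - M.β) + M.β * (M.Kc * M.β ^ n / (1 - M.β))
          = (M.Kc * M.β / (1 - M.β) + M.β * M.Kc / (1 - M.β)) * M.β ^ n := by
        rw [pow_succ]; ring
      linarith [e ▸ add_le_add h2 h1]
    have h0 : |M.Vfix p - M.B M.Vfix p| ≤ 0 :=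
      ge_of_tendsto' (M.Dtendsto (M.Kc * M.β / (1 - M.β) + M.β * M.Kc / (1 - M.β))) key
    have : |M.Vfix p - M.B M.Vfix p| = 0 := le_antisymm h0 (abs_nonneg _)
    exact sub_eq_zero.mp (abs_eq_zero.mp this)
  -- concavity and monotonicity of the iterates
  have hiter : ∀ n : ℕ, ConcaveOn ℝ (Set.Icc (0:ℝ) 1) (M.seqIter n) ∧
      MonotoneOn (M.seqIter n) (Set.Icc (0:ℝ) 1) := by
    intro n
    induction n with
    | zero =>
      constructor
      · show ConcaveOn ℝ (Set.Icc (0:ℝ) 1) (fun _ => (0:ℝ))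
        exact concaveOn_const 0 (convex_Icc 0 1)
      · show MonotoneOn (fun _ => (0:ℝ)) (Set.Icc (0:ℝ) 1)
        exact monotoneOn_const
    | succ n ih => exact ⟨M.B_concave _ ih.1, M.B_mono _ ih.2⟩
  -- concavity of V
  have hconc : ConcaveOn ℝ (Set.Icc (0:ℝ) 1) M.Vfix := by
    refine ⟨convex_Icc 0 1, ?_⟩
    intro x hx y hy a b ha hb hab
    have hz : a • x + b • y ∈ Set.Icc (0:ℝ) 1 := (convex_Icc (0:ℝ) 1) hx hy ha hb hab
    have t1 : Tendsto (fun n => a * M.seqIter n x + b * M.seqIter n y) atTop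
        (𝓝 (a * M.Vfix x + b * M.Vfix y)) :=
      ((M.tendsto_Vfix hx).const_mul a).add ((M.tendsto_Vfix hy).const_mul b)
    have t2 := M.tendsto_Vfix hz
    have hle : ∀ n, a * M.seqIter n x + b * M.seqIter n y ≤ M.seqIter n (a • x + b • y) := by
      intro n
      have := (hiter n).1.2 hx hy ha hb hab
      simpa [smul_eq_mul] using this
    have := le_of_tendsto_of_tendsto' t1 t2 hle
    simpa [smul_eq_mul] using this
  -- monotonicity of V
  have hmono : MonotoneOn M.Vfix (Set.Icc (0:ℝ) 1) := by
    intro x hx y hy hxy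
    exact le_of_tendsto_of_tendsto' (M.tendsto_Vfix hx) (M.tendsto_Vfix hy)
      (fun n => (hiter n).2 hx hy hxy)
  -- uniqueness
  have huniq : ∀ W : ℝ → ℝ, M.IsValue W → ∀ p ∈ Set.Icc (0:ℝ) 1, W p = M.Vfix p := by
    rintro W ⟨⟨CW, hCW⟩, hWfix⟩ p hp
    obtain ⟨CV, hCV⟩ := hVbdd
    have key : ∀ n : ℕ, ∀ q ∈ Set.Icc (0:ℝ) 1, |W q - M.Vfix q| ≤ (CW + CV) * M.β ^ n := by
      intro n
      induction n with
      | zero =>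
        intro q hq
        have := abs_sub (W q) (M.Vfix q)
        have h1 := hCW q hq
        have h2 := hCV q hq
        calc |W q - M.Vfix q| ≤ |W q| + |M.Vfix q| := abs_sub _ _
          _ ≤ (CW + CV) * M.β ^ 0 := by rw [pow_zero]; linarith
      | succ n ih =>
        intro q hq
        rw [hWfix q hq, hfix q hq]
        have := M.contract W M.Vfix ((CW + CV) * M.β ^ n) ih q hq
        calc |M.B W q - M.B M.Vfix q| ≤ M.β * ((CW + CV) * M.β ^ n) := this
          _ = (CW + CV) * M.β ^ (n+1) := by ring
    have h0 : |W p - M.Vfix p| ≤ 0 :=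
      ge_of_tendsto' (M.Dtendsto (CW + CV)) (fun n => key n p hp)
    have : |W p - M.Vfix p| = 0 := le_antisymm h0 (abs_nonneg _)
    exact sub_eq_zero.mp (abs_eq_zero.mp this)
  exact ⟨M.Vfix, ⟨hVbdd, hfix⟩, huniq, hconc, hmono⟩
end

section
/- There exists τ ∈ [0,1] such that V'(p) = HP'-value(p) for every p ∈ [0,1] with p < τ and V'(p) = LP'-value(p) for every p ∈ [0,1] with p > τ; that is, the optimal stationary policy for the coupon-dependent model has threshold structure. -/
set_option maxHeartbeats 1000000 in
/-- The optimal stationary policy for the coupon-dependent model has threshold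
structure: there is `τ ∈ [0,1]` such that HP is optimal below `τ` and LP is
optimal above `τ`. -/
theorem dep_threshold_structure (M : CouponModelDep) (V : ℝ → ℝ) (hV : M.IsValue V) :
    ∃ τ ∈ Set.Icc (0:ℝ) 1,
      (∀ p ∈ Set.Icc (0:ℝ) 1, p < τ → V p = M.HPval V p) ∧
      (∀ p ∈ Set.Icc (0:ℝ) 1, τ < p → V p = M.LPval V p) := by
  obtain ⟨⟨C, hC⟩, hfix⟩ := hV
  have hβ0 : (0:ℝ) < M.β := M.β_pos
  have hβ1 : M.β < 1 := M.β_lt_one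
  have hlNA := M.lNA_nonneg
  have hlle := M.lNA_le_lAA
  have hlAA := M.lAA_le_one
  have hl'NA : M.lNA' ∈ Set.Icc (0:ℝ) 1 :=
    ⟨M.lNA'_nonneg, le_trans M.lNA'_le_lAA' M.lAA'_le_one⟩
  have hl'AA : M.lAA' ∈ Set.Icc (0:ℝ) 1 :=
    ⟨le_trans M.lNA'_nonneg M.lNA'_le_lAA', M.lAA'_le_one⟩
  have hTmem : ∀ p ∈ Set.Icc (0:ℝ) 1, M.T p ∈ Set.Icc (0:ℝ) 1 := by
    rintro p ⟨hp0, hp1⟩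
    constructor
    · simp only [CouponModelDep.T]
      nlinarith
    · simp only [CouponModelDep.T]
      nlinarith
  have hTmono : ∀ p q : ℝ, p ≤ q → M.T q - M.T p = (q - p) * (M.lAA - M.lNA) := by
    intro p q _; simp only [CouponModelDep.T]; ring
  have hVmin : ∀ p ∈ Set.Icc (0:ℝ) 1, V p = min (M.LPval V p) (M.HPval V p) := by
    intro p hp
    rw [hfix p hp]; rfl
  have minmax : ∀ a b c d : ℝ, min a b - min c d ≤ max (a - c) (b - d) := by
    intro a b c d
    rcases min_cases c d with ⟨h1, _⟩ | ⟨h1, _⟩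
    · rw [h1]
      exact le_trans (sub_le_sub_right (min_le_left a b) c) (le_max_left _ _)
    · rw [h1]
      exact le_trans (sub_le_sub_right (min_le_right a b) d) (le_max_right _ _)
  -- Step 1: V is nondecreasing on [0,1]
  have hmono : ∀ p ∈ Set.Icc (0:ℝ) 1, ∀ q ∈ Set.Icc (0:ℝ) 1, p ≤ q → V p ≤ V q := by
    set A : Set ℝ := {a : ℝ | ∃ p ∈ Set.Icc (0:ℝ) 1, ∃ q ∈ Set.Icc (0:ℝ) 1,
      p ≤ q ∧ a = V p - V q} with hA
    have hmemA : ∀ p ∈ Set.Icc (0:ℝ) 1, ∀ q ∈ Set.Icc (0:ℝ) 1, p ≤ q →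
        V p - V q ∈ A := by
      intro p hp q hq hpq; exact ⟨p, hp, q, hq, hpq, rfl⟩
    have hne : (0:ℝ) ∈ A := by
      have := hmemA 0 (by norm_num) 0 (by norm_num) le_rfl
      simpa using this
    have hbdd : BddAbove A := by
      refine ⟨2 * C, ?_⟩
      rintro a ⟨p, hp, q, hq, _, rfl⟩
      have h1 := abs_le.mp (hC p hp)
      have h2 := abs_le.mp (hC q hq)
      linarith [h1.2, h2.1]
    set E := sSup A with hE
    have hE0 : 0 ≤ E := le_csSup hbdd hne
    have key : ∀ a ∈ A, a ≤ M.β * E := by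
      rintro a ⟨p, hp, q, hq, hpq, rfl⟩
      rw [hVmin p hp, hVmin q hq]
      refine le_trans (minmax _ _ _ _) ?_
      have hLP : M.LPval V p - M.LPval V q ≤ M.β * E := by
        have hT : M.T p ≤ M.T q := by
          have := hTmono p q hpq; nlinarith
        have hmem := hmemA _ (hTmem p hp) _ (hTmem q hq) hT
        have := le_csSup hbdd hmem
        simp only [CouponModelDep.LPval]
        nlinarith
      have hHP : M.HPval V p - M.HPval V q ≤ M.β * E := by
        have hmem := hmemA _ hl'NA _ hl'AA M.lNA'_le_lAA'
        have hxy : V M.lNA' - V M.lAA' ≤ E := le_csSup hbdd hmem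
        have hCHle : M.CHN ≤ M.CHA := le_trans M.CHN_le_CL M.CL_le_CHA
        have heq : M.HPval V p - M.HPval V q =
            (q - p) * (M.CHN - M.CHA) + M.β * (q - p) * (V M.lNA' - V M.lAA') := by
          simp only [CouponModelDep.HPval]; ring
        rw [heq]
        have h1 : q - p ≤ 1 := by linarith [hp.1, hq.2]
        have t1 : M.β * (q - p) * (V M.lNA' - V M.lAA') ≤ M.β * (q - p) * E :=
          mul_le_mul_of_nonneg_left hxy (mul_nonneg hβ0.le (by linarith))
        have t2 : M.β * (q - p) * E ≤ M.β * E := by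
          nlinarith [mul_nonneg (mul_nonneg hβ0.le (show (0:ℝ) ≤ 1 - (q - p) by linarith)) hE0]
        have t3 : 0 ≤ (q - p) * (M.CHA - M.CHN) :=
          mul_nonneg (by linarith) (by linarith)
        nlinarith
      exact max_le hLP hHP
    have hEβ : E ≤ M.β * E := csSup_le ⟨0, hne⟩ key
    have hEneg : E ≤ 0 := by nlinarith
    intro p hp q hq hpq
    have := le_csSup hbdd (hmemA p hp q hq hpq)
    linarith
  -- HP slope
  set D := (M.CHA - M.CHN) + M.β * (V M.lAA' - V M.lNA') with hDdef
  have hD0 : 0 ≤ D := by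
    have := hmono _ hl'NA _ hl'AA M.lNA'_le_lAA'
    have hCHle : M.CHN ≤ M.CHA := le_trans M.CHN_le_CL M.CL_le_CHA
    nlinarith
  have hHPdiff : ∀ p q : ℝ, M.HPval V q - M.HPval V p = (q - p) * D := by
    intro p q; simp only [CouponModelDep.HPval, hDdef]; ring
  have hfac : 0 ≤ 1 - M.β * (M.lAA - M.lNA) := by
    nlinarith [mul_nonneg hβ0.le (show (0:ℝ) ≤ 1 - (M.lAA - M.lNA) by linarith)]
  -- Step 2: slope of V bounded by D
  have hslope : ∀ p ∈ Set.Icc (0:ℝ) 1, ∀ q ∈ Set.Icc (0:ℝ) 1, p ≤ q →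
      V q - V p ≤ (q - p) * D := by
    set A : Set ℝ := {a : ℝ | ∃ p ∈ Set.Icc (0:ℝ) 1, ∃ q ∈ Set.Icc (0:ℝ) 1,
      p ≤ q ∧ a = V q - V p - (q - p) * D} with hA
    have hmemA : ∀ p ∈ Set.Icc (0:ℝ) 1, ∀ q ∈ Set.Icc (0:ℝ) 1, p ≤ q →
        V q - V p - (q - p) * D ∈ A := by
      intro p hp q hq hpq; exact ⟨p, hp, q, hq, hpq, rfl⟩
    have hne : (0:ℝ) ∈ A := by
      have := hmemA 0 (by norm_num) 0 (by norm_num) le_rfl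
      simpa using this
    have hbdd : BddAbove A := by
      refine ⟨2 * C, ?_⟩
      rintro a ⟨p, hp, q, hq, hpq, rfl⟩
      have h1 := abs_le.mp (hC p hp)
      have h2 := abs_le.mp (hC q hq)
      have h3 : 0 ≤ (q - p) * D := mul_nonneg (by linarith) hD0
      linarith [h1.1, h2.2]
    set E := sSup A with hE
    have hE0 : 0 ≤ E := le_csSup hbdd hne
    have key : ∀ a ∈ A, a ≤ M.β * E := by
      rintro a ⟨p, hp, q, hq, hpq, rfl⟩
      have hmm : V q - V p ≤ max (M.LPval V q - M.LPval V p)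
          (M.HPval V q - M.HPval V p) := by
        rw [hVmin p hp, hVmin q hq]; exact minmax _ _ _ _
      have hLP : M.LPval V q - M.LPval V p ≤ M.β * E + (q - p) * D := by
        have hT : M.T p ≤ M.T q := by
          have := hTmono p q hpq; nlinarith
        have hTd : M.T q - M.T p = (q - p) * (M.lAA - M.lNA) := hTmono p q hpq
        have hmem := hmemA _ (hTmem p hp) _ (hTmem q hq) hT
        have hEm : V (M.T q) - V (M.T p) - (M.T q - M.T p) * D ≤ E :=
          le_csSup hbdd hmem
        rw [hTd] at hEm
        have hEm' : V (M.T q) - V (M.T p) ≤ E + (q - p) * (M.lAA - M.lNA) * D := by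
          linarith
        have hb := mul_le_mul_of_nonneg_left hEm' hβ0.le
        have haux : M.β * ((q - p) * (M.lAA - M.lNA) * D) ≤ (q - p) * D := by
          nlinarith [mul_nonneg (mul_nonneg (sub_nonneg.mpr hpq) hD0) hfac]
        simp only [CouponModelDep.LPval]
        nlinarith [hb, haux]
      have hHP : M.HPval V q - M.HPval V p ≤ M.β * E + (q - p) * D := by
        rw [hHPdiff p q]
        nlinarith
      have := max_le hLP hHP
      linarith [le_trans hmm this]
    have hEβ : E ≤ M.β * E := csSup_le ⟨0, hne⟩ key
    have hEneg : E ≤ 0 := by nlinarith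
    intro p hp q hq hpq
    have := le_csSup hbdd (hmemA p hp q hq hpq)
    linarith
  -- Step 3: g = LPval - HPval is nonincreasing on [0,1]
  have hg : ∀ p ∈ Set.Icc (0:ℝ) 1, ∀ q ∈ Set.Icc (0:ℝ) 1, p ≤ q →
      M.LPval V q - M.HPval V q ≤ M.LPval V p - M.HPval V p := by
    intro p hp q hq hpq
    have hT : M.T p ≤ M.T q := by
      have := hTmono p q hpq; nlinarith
    have hTd : M.T q - M.T p = (q - p) * (M.lAA - M.lNA) := hTmono p q hpq
    have hs := hslope _ (hTmem p hp) _ (hTmem q hq) hT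
    have hLPd : M.LPval V q - M.LPval V p = M.β * (V (M.T q) - V (M.T p)) := by
      simp only [CouponModelDep.LPval]; ring
    have hHPd := hHPdiff p q
    rw [hTd] at hs
    have hb := mul_le_mul_of_nonneg_left hs hβ0.le
    have haux : M.β * ((q - p) * (M.lAA - M.lNA) * D) ≤ (q - p) * D := by
      nlinarith [mul_nonneg (mul_nonneg (sub_nonneg.mpr hpq) hD0) hfac]
    nlinarith [hb, haux]
  -- Step 4: construct the threshold
  set S : Set ℝ := insert 1 {p | p ∈ Set.Icc (0:ℝ) 1 ∧ M.LPval V p ≤ M.HPval V p}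
    with hS
  have hSne : (1:ℝ) ∈ S := Set.mem_insert 1 _
  have hSlb : ∀ b ∈ S, (0:ℝ) ≤ b := by
    rintro x (rfl | ⟨hx, _⟩)
    · norm_num
    · exact hx.1
  have hSbdd : BddBelow S := ⟨0, hSlb⟩
  refine ⟨sInf S, ⟨le_csInf ⟨1, hSne⟩ hSlb, csInf_le hSbdd hSne⟩, ?_, ?_⟩
  · intro p hp hplt
    have hpnot : p ∉ S := fun hmem => absurd (csInf_le hSbdd hmem) (not_le.mpr hplt)
    have : ¬ (M.LPval V p ≤ M.HPval V p) := by
      intro h; exact hpnot (Set.mem_insert_of_mem _ ⟨hp, h⟩)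
    rw [hVmin p hp]
    exact min_eq_right (le_of_lt (not_le.mp this))
  · intro p hp hplt
    obtain ⟨s, hs, hsp⟩ := exists_lt_of_csInf_lt ⟨1, hSne⟩ hplt
    rcases hs with rfl | ⟨hsI, hsLP⟩
    · linarith [hp.2]
    · have := hg s hsI p hp (le_of_lt hsp)
      rw [hVmin p hp]
      exact min_eq_left (by linarith)
end

section
/- Assume C_HN < C_HA and set κ = (C_L − C_HN)/(C_HA − C_HN). Suppose τ ∈ [0,1] satisfies: V'(p) = HP'-value(p) for all p ≤ τ, V'(p) = LP'-value(p) for all p ≥ τ, T(τ) ≥ τ, and λ'NA ≥ τ. Then τ = κ. -/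
/-!
On `[τ, 1]` the LP coupon is optimal and, `T` being increasing with `T τ ≥ τ`, `T` maps `[τ, 1]`
into itself, so there the bounded value function solves `V p = C_L + β V (T p)`; contraction
forces `V ≡ C_L / (1 - β)` on `[τ, 1]`. Both HP destinations `λ'NA ≤ λ'AA` lie in `[τ, 1]`, so the HP equation at `τ` reads
`C_L / (1 - β) = (1 - τ) C_HN + τ C_HA + β C_L / (1 - β)`, i.e. `(1 - τ) C_HN + τ C_HA = C_L`.
-/

open Set

lemma eq_zero_of_bounded_of_eq_mul_comp {α : Type*} {S : Set α} {g : α → α}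
    (hg : MapsTo g S S) {d : α → ℝ} {C : ℝ} (hC : ∀ x ∈ S, |d x| ≤ C) {r : ℝ} (hr : |r| < 1)
    (hd : ∀ x ∈ S, d x = r * d (g x)) : ∀ x ∈ S, d x = 0 := by
  have hiter : ∀ n : ℕ, ∀ x ∈ S, |d x| ≤ |r| ^ n * C := by
    intro n
    induction n with
    | zero => simpa using hC
    | succ n ih =>
      intro x hx
      calc |d x| = |r| * |d (g x)| := by rw [hd x hx, abs_mul]
        _ ≤ |r| * (|r| ^ n * C) := by gcongr; exact ih _ (hg hx)
        _ = |r| ^ (n + 1) * C := by ring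
  intro x hx
  have hlim : Filter.Tendsto (fun n : ℕ => |r| ^ n * C) Filter.atTop (nhds 0) := by
    simpa using (tendsto_pow_atTop_nhds_zero_of_lt_one (abs_nonneg r) hr).mul_const C
  exact abs_nonpos_iff.mp (ge_of_tendsto' hlim fun n => hiter n x hx)

lemma eq_div_of_bounded_of_eq_add_mul_comp {α : Type*} {S : Set α} {g : α → α}
    (hg : MapsTo g S S) {f : α → ℝ} {C : ℝ} (hC : ∀ x ∈ S, |f x| ≤ C) {c r : ℝ} (hr : |r| < 1)
    (hf : ∀ x ∈ S, f x = c + r * f (g x)) : ∀ x ∈ S, f x = c / (1 - r) := by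
  have hr1 : 1 - r ≠ 0 := by linarith [le_abs_self r]
  have hfix : c / (1 - r) = c + r * (c / (1 - r)) := by field_simp; ring
  intro x hx
  refine sub_eq_zero.mp (eq_zero_of_bounded_of_eq_mul_comp (d := fun y => f y - c / (1 - r))
    hg (C := C + |c / (1 - r)|) (fun y hy => ?_) hr (fun y hy => ?_) x hx)
  · exact (abs_sub _ _).trans (by linarith [hC y hy])
  · rw [hf y hy]
    linarith

namespace CouponModelDep

variable (M : CouponModelDep)

lemma abs_β_lt_one : |M.β| < 1 := by
  rw [abs_of_pos M.β_pos]
  exact M.β_lt_one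

lemma monotone_T : Monotone M.T := fun _ _ hpq => by
  unfold T
  nlinarith [M.lNA_le_lAA]

lemma T_mem_Icc {p : ℝ} (hp : p ∈ Icc (0 : ℝ) 1) : M.T p ∈ Icc (0 : ℝ) 1 := by
  obtain ⟨h0, h1⟩ := hp
  unfold T
  constructor <;> nlinarith [M.lNA_nonneg, M.lNA_le_lAA, M.lAA_le_one]

lemma mapsTo_T_Icc {τ : ℝ} (hτ : 0 ≤ τ) (hT : τ ≤ M.T τ) : MapsTo M.T (Icc τ 1) (Icc τ 1) :=
  fun _ hp =>
    ⟨hT.trans (M.monotone_T hp.1), (M.T_mem_Icc ⟨hτ.trans hp.1, hp.2⟩).2⟩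

lemma lNA'_mem_Icc {τ : ℝ} (hNA' : τ ≤ M.lNA') : M.lNA' ∈ Icc τ 1 :=
  ⟨hNA', M.lNA'_le_lAA'.trans M.lAA'_le_one⟩

lemma lAA'_mem_Icc {τ : ℝ} (hNA' : τ ≤ M.lNA') : M.lAA' ∈ Icc τ 1 :=
  ⟨hNA'.trans M.lNA'_le_lAA', M.lAA'_le_one⟩

end CouponModelDep

/-- If `τ ∈ [0,1]` is a threshold for the coupon-dependent value function with
`T(τ) ≥ τ` and `λ'NA ≥ τ`, then `τ = κ = (C_L - C_HN)/(C_HA - C_HN)`. -/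
theorem dep_threshold_eq_kappa (M : CouponModelDep) (hC : M.CHN < M.CHA)
    (V : ℝ → ℝ) (hV : M.IsValue V)
    (τ : ℝ) (hτ : τ ∈ Set.Icc (0:ℝ) 1)
    (hHP : ∀ p ∈ Set.Icc (0:ℝ) 1, p ≤ τ → V p = M.HPval V p)
    (hLP : ∀ p ∈ Set.Icc (0:ℝ) 1, τ ≤ p → V p = M.LPval V p)
    (hT : τ ≤ M.T τ) (hNA' : τ ≤ M.lNA') :
    τ = (M.CL - M.CHN) / (M.CHA - M.CHN) := by
  obtain ⟨⟨B, hB⟩, -⟩ := hV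
  have hsub : Icc τ 1 ⊆ Icc 0 1 := Icc_subset_Icc_left hτ.1
  have hconst : ∀ p ∈ Icc τ 1, V p = M.CL / (1 - M.β) :=
    eq_div_of_bounded_of_eq_add_mul_comp (M.mapsTo_T_Icc hτ.1 hT)
      (fun p hp => hB p (hsub hp)) M.abs_β_lt_one fun p hp => hLP p (hsub hp) hp.1
  have hHPτ := hHP τ hτ le_rfl
  rw [CouponModelDep.HPval, hconst τ ⟨le_rfl, hτ.2⟩, hconst _ (M.lNA'_mem_Icc hNA'),
    hconst _ (M.lAA'_mem_Icc hNA')] at hHPτ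
  have hβ : 1 - M.β ≠ 0 := by linarith [M.β_lt_one]
  have hcost : (1 - τ) * M.CHN + τ * M.CHA = M.CL := by
    field_simp at hHPτ
    exact mul_left_cancel₀ hβ (by linear_combination -hHPτ)
  rw [eq_div_iff (by linarith)]
  linarith
end
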